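/- arXiv:1009.1347 — 2 statements merged into one kernel-verified Lean document; each statement's English description precedes it below -/
import Mathlib

section
/- In the setting of a finite-dimensional rational inner product space V with orthogonal maps w_0,…,w_m and reflections s_{j_1},…,s_{j_m} in nonzero vectors α_{j_1},…,α_{j_m}, set w^Δ := w_0 w_1 ⋯ w_m, β_{j_ℓ} := w_0 s_{j_1} w_1 ⋯ s_{j_{ℓ−1}} w_{ℓ−1}(α_{j_ℓ}), β^Δ_{j_ℓ} := w_0 w_1 ⋯ w_{ℓ−1}(α_{j_ℓ}), and u_ℓ := w_0 s_{j_1} w_1 ⋯ w_{ℓ−1}(s_{j_ℓ} − id)w_ℓ ⋯ w_m. Then for every γ ∈ V and every ℓ: u_ℓ(γ) = −⟨(β^Δ_{j_ℓ})∨, w^Δ(γ)⟩ · β_{j_ℓ}, where for a nonzero vector β we write β∨ = (2/⟨β,β⟩)β. -/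
open scoped RealInnerProductSpace

/-- `pref w s ℓ = w₀ s₁ w₁ ⋯ s_ℓ w_ℓ` (composition of endomorphisms). -/
def pref {V : Type*} [NormedAddCommGroup V] [InnerProductSpace ℝ V]
    (w s : ℕ → Module.End ℝ V) : ℕ → Module.End ℝ V
  | 0 => w 0
  | ℓ + 1 => pref w s ℓ * s (ℓ + 1) * w (ℓ + 1)

/-- `plainPref w ℓ = w₀ w₁ ⋯ w_ℓ`. -/
def plainPref {V : Type*} [NormedAddCommGroup V] [InnerProductSpace ℝ V]
    (w : ℕ → Module.End ℝ V) : ℕ → Module.End ℝ V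
  | 0 => w 0
  | ℓ + 1 => plainPref w ℓ * w (ℓ + 1)

/-- `suff w m ℓ = w_ℓ w_{ℓ+1} ⋯ w_m`. -/
def suff {V : Type*} [NormedAddCommGroup V] [InnerProductSpace ℝ V]
    (w : ℕ → Module.End ℝ V) (m ℓ : ℕ) : Module.End ℝ V :=
  ((List.range (m + 1 - ℓ)).map fun i => w (ℓ + i)).prod

/-- `uop w s m ℓ = w₀ s₁ w₁ ⋯ w_{ℓ-1} (s_ℓ - id) w_ℓ ⋯ w_m`. -/
def uop {V : Type*} [NormedAddCommGroup V] [InnerProductSpace ℝ V]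
    (w s : ℕ → Module.End ℝ V) (m ℓ : ℕ) : Module.End ℝ V :=
  pref w s (ℓ - 1) * (s ℓ - 1) * suff w m ℓ

/-- `vop w s m ℓ = w₀ s₁ w₁ ⋯ w_{ℓ-1} (s_ℓ + id) w_ℓ ⋯ w_m`. -/
def vop {V : Type*} [NormedAddCommGroup V] [InnerProductSpace ℝ V]
    (w s : ℕ → Module.End ℝ V) (m ℓ : ℕ) : Module.End ℝ V :=
  pref w s (ℓ - 1) * (s ℓ + 1) * suff w m ℓ

/-- `β_{j_ℓ} = w₀ s₁ w₁ ⋯ s_{ℓ-1} w_{ℓ-1} (α_{j_ℓ})`. -/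
def betaV {V : Type*} [NormedAddCommGroup V] [InnerProductSpace ℝ V]
    (w s : ℕ → Module.End ℝ V) (α : ℕ → V) (ℓ : ℕ) : V :=
  pref w s (ℓ - 1) (α ℓ)

/-- `β^Δ_{j_ℓ} = w₀ w₁ ⋯ w_{ℓ-1} (α_{j_ℓ})`. -/
def betaD {V : Type*} [NormedAddCommGroup V] [InnerProductSpace ℝ V]
    (w : ℕ → Module.End ℝ V) (α : ℕ → V) (ℓ : ℕ) : V :=
  plainPref w (ℓ - 1) (α ℓ)

/-- `⟨(β^Δ_{j_ℓ})∨, w^Δ(γ)⟩` where `β∨ = (2/⟨β,β⟩)β`. -/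
noncomputable def coeffc {V : Type*} [NormedAddCommGroup V] [InnerProductSpace ℝ V]
    (w s : ℕ → Module.End ℝ V) (α : ℕ → V) (m : ℕ) (γ : V) (ℓ : ℕ) : ℝ :=
  (2 / ⟪betaD w α ℓ, betaD w α ℓ⟫) * ⟪betaD w α ℓ, plainPref w m γ⟫

/-
Write `v = w_ℓ ⋯ w_m γ`. Then `u_ℓ γ = w₀ s₁ ⋯ w_{ℓ-1} ((s_ℓ - 1) v)` and `(s_ℓ - 1) v` is the
multiple `-(2⟨α_ℓ, v⟩/⟨α_ℓ, α_ℓ⟩) α_ℓ` of `α_ℓ`, which the prefix sends to that multiple of `β_ℓ`. Since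
`w^Δ γ = w₀ ⋯ w_{ℓ-1} v` and `w₀ ⋯ w_{ℓ-1}` is an isometry, this coefficient equals
`⟨(β^Δ_ℓ)∨, w^Δ γ⟩`.
-/

section Products

variable {V : Type*} [NormedAddCommGroup V] [InnerProductSpace ℝ V] (w : ℕ → Module.End ℝ V)

theorem inner_plainPref_plainPref (hw : ∀ i (x y : V), ⟪w i x, w i y⟫ = ⟪x, y⟫) (k : ℕ) (x y : V) :
    ⟪plainPref w k x, plainPref w k y⟫ = ⟪x, y⟫ := by
  induction k generalizing x y with
  | zero => exact hw 0 x y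
  | succ k ih => rw [plainPref, Module.End.mul_apply, Module.End.mul_apply, ih, hw]

theorem suff_succ_left {m ℓ : ℕ} (h : ℓ ≤ m + 1) :
    suff w (m + 1) ℓ = suff w m ℓ * w (m + 1) := by
  rw [suff, suff, Nat.sub_add_comm h, List.range_succ, List.map_append, List.prod_append,
    List.map_singleton, List.prod_singleton, Nat.add_sub_cancel' h]

theorem plainPref_add_eq_mul_suff (k n : ℕ) :
    plainPref w (k + n) = plainPref w k * suff w (k + n) (k + 1) := by
  induction n with
  | zero => simp [suff]
  | succ n ih =>
    rw [← add_assoc, plainPref, ih, suff_succ_left w (by omega), mul_assoc]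

end Products

theorem sub_one_apply_of_apply_eq_sub_smul {V : Type*} [AddCommGroup V] [Module ℝ V]
    {f : Module.End ℝ V} {v a : V} {c : ℝ} (hf : f v = v - c • a) : (f - 1) v = -c • a := by
  rw [LinearMap.sub_apply, Module.End.one_apply, hf, sub_sub_cancel_left, neg_smul]

theorem coeffc_succ_eq {V : Type*} [NormedAddCommGroup V] [InnerProductSpace ℝ V]
    (w s : ℕ → Module.End ℝ V) (α : ℕ → V) (hw : ∀ i (x y : V), ⟪w i x, w i y⟫ = ⟪x, y⟫)
    {m k : ℕ} (hk : k ≤ m) (γ : V) :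
    coeffc w s α m γ (k + 1) =
      2 * ⟪α (k + 1), suff w m (k + 1) γ⟫ / ⟪α (k + 1), α (k + 1)⟫ := by
  obtain ⟨n, rfl⟩ := Nat.exists_eq_add_of_le hk
  rw [coeffc, betaD, Nat.add_sub_cancel, plainPref_add_eq_mul_suff, Module.End.mul_apply,
    inner_plainPref_plainPref w hw, inner_plainPref_plainPref w hw, div_mul_eq_mul_div]

theorem u_ell_apply_general
    {V : Type*} [NormedAddCommGroup V] [InnerProductSpace ℝ V]
    (m : ℕ) (w s : ℕ → Module.End ℝ V) (α : ℕ → V)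
    (hw : ∀ i (x y : V), ⟪w i x, w i y⟫ = ⟪x, y⟫)
    (hs : ∀ ℓ (v : V), s ℓ v = v - ((2 * ⟪α ℓ, v⟫) / ⟪α ℓ, α ℓ⟫) • α ℓ) :
    ∀ (γ : V) (ℓ : ℕ), 1 ≤ ℓ → ℓ ≤ m →
      uop w s m ℓ γ = -(coeffc w s α m γ ℓ) • betaV w s α ℓ := by
  intro γ ℓ hℓ hℓm
  obtain ⟨k, rfl⟩ : ∃ k, ℓ = k + 1 := ⟨ℓ - 1, by omega⟩
  rw [uop, betaV, Module.End.mul_apply, Module.End.mul_apply,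
    sub_one_apply_of_apply_eq_sub_smul (hs _ _), map_smul,
    coeffc_succ_eq w s α hw (Nat.le_of_succ_le hℓm)]

theorem u_ell_apply
    {V : Type*} [NormedAddCommGroup V] [InnerProductSpace ℝ V] [FiniteDimensional ℝ V]
    (m : ℕ) (w s : ℕ → Module.End ℝ V) (α : ℕ → V)
    (hα : ∀ ℓ, α ℓ ≠ 0)
    (hw : ∀ i (x y : V), ⟪w i x, w i y⟫ = ⟪x, y⟫)
    (hs : ∀ ℓ (v : V), s ℓ v = v - ((2 * ⟪α ℓ, v⟫) / ⟪α ℓ, α ℓ⟫) • α ℓ) :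
    ∀ (γ : V) (ℓ : ℕ), 1 ≤ ℓ → ℓ ≤ m →
      uop w s m ℓ γ = -(coeffc w s α m γ ℓ) • betaV w s α ℓ :=
  u_ell_apply_general m w s α hw hs
end

section
/- In the Weyl-group setting above, define Φ : ℚ^m → V on the standard basis by Φ(e_h) = (1/2)(w^Δ)^{−1}(β_{j_h}), and let Ψ : ker(w + w^Δ) → ker(M) be Ψ(γ) = Σ_h ⟨(β^Δ_{j_h})∨, w^Δ(γ)⟩ e_h. Then Φ maps ker(M) into ker(w + w^Δ), and the restrictions satisfy Ψ ∘ Φ = id on ker(M) and Φ ∘ Ψ = id on ker(w + w^Δ). -/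
open scoped RealInnerProductSpace

/-!
Telescoping `w = w₀ s₁ w₁ ⋯ s_m w_m` through the reflections `s_ℓ v = v - ⟨α_ℓ∨, v⟩ α_ℓ` gives
`w γ = w^Δ γ - ∑_h Ψ(γ)_h β_h`, from which `Φ ∘ Ψ = id` on `ker (w + w^Δ)` follows at once,
and `Φ (ker M) ⊆ ker (w + w^Δ)` follows from `Ψ ∘ Φ = id` on `ker M`. For the latter, pairing
the partial telescoping sums with `β_ℓ` shows `T (Ψ γ) = (⟨β_ℓ, w^Δ γ⟩)_ℓ`, where `T` is the
lower triangle of the Gram matrix of the `β`'s with halved diagonal. Since that Gram matrix is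
`2 T + M` and `w^Δ (Φ x) = ½ ∑_h x_h β_h`, for `x ∈ ker M` both `Ψ (Φ x)` and `x` solve the
same triangular system, whose diagonal entries `⟨α_ℓ, α_ℓ⟩ / 2` are nonzero.
-/

open Finset Matrix

section Products

variable {V : Type*} [NormedAddCommGroup V] [InnerProductSpace ℝ V] (w : ℕ → Module.End ℝ V)

lemma suff_self_add_one (m : ℕ) : suff w m (m + 1) = 1 := by
  simp [suff]

lemma suff_eq_mul_suff_succ {m ℓ : ℕ} (h : ℓ ≤ m) :
    suff w m ℓ = w ℓ * suff w m (ℓ + 1) := by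
  rw [suff, suff, show m + 1 - ℓ = m + 1 - (ℓ + 1) + 1 by omega, List.range_succ_eq_map,
    List.map_cons, List.map_map, List.prod_cons, add_zero]
  congr 3
  funext i
  simp [add_assoc, add_comm 1 i]

lemma plainPref_mul_suff {m n : ℕ} (h : n ≤ m) :
    plainPref w n * suff w m (n + 1) = plainPref w m := by
  obtain ⟨k, rfl⟩ := Nat.exists_eq_add_of_le h
  induction k generalizing n with
  | zero => rw [add_zero, suff_self_add_one, mul_one]
  | succ k ih =>
    rw [show n + (k + 1) = n + 1 + k by omega, suff_eq_mul_suff_succ w (by omega),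
      ← mul_assoc]
    exact ih (n := n + 1) (by omega)

end Products

section Orthogonality

variable {V : Type*} [NormedAddCommGroup V] [InnerProductSpace ℝ V]

lemma inner_sub_reflection (a x y : V) :
    ⟪x - (2 * ⟪a, x⟫ / ⟪a, a⟫) • a, y - (2 * ⟪a, y⟫ / ⟪a, a⟫) • a⟫ = ⟪x, y⟫ := by
  rcases eq_or_ne a 0 with rfl | ha
  · simp
  have : ⟪a, a⟫ ≠ 0 := inner_self_ne_zero.2 ha
  simp only [inner_sub_left, inner_sub_right, real_inner_smul_left, real_inner_smul_right,
    real_inner_comm a x]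
  field_simp
  ring

lemma inner_plainPref_apply {w : ℕ → Module.End ℝ V}
    (hw : ∀ i (x y : V), ⟪w i x, w i y⟫ = ⟪x, y⟫) :
    ∀ ℓ (x y : V), ⟪plainPref w ℓ x, plainPref w ℓ y⟫ = ⟪x, y⟫
  | 0, x, y => hw 0 x y
  | ℓ + 1, x, y => (inner_plainPref_apply hw ℓ _ _).trans (hw _ x y)

variable {w s : ℕ → Module.End ℝ V} {α : ℕ → V}

lemma inner_pref_apply (hw : ∀ i (x y : V), ⟪w i x, w i y⟫ = ⟪x, y⟫)
    (hs : ∀ ℓ (v : V), s ℓ v = v - ((2 * ⟪α ℓ, v⟫) / ⟪α ℓ, α ℓ⟫) • α ℓ) :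
    ∀ ℓ (x y : V), ⟪pref w s ℓ x, pref w s ℓ y⟫ = ⟪x, y⟫
  | 0, x, y => hw 0 x y
  | ℓ + 1, x, y => by
    change ⟪pref w s ℓ (s _ (w _ x)), pref w s ℓ (s _ (w _ y))⟫ = _
    rw [inner_pref_apply hw hs ℓ, hs, hs, inner_sub_reflection, hw]

end Orthogonality

section HalfGram

variable {V : Type*} [NormedAddCommGroup V] [InnerProductSpace ℝ V]
  {ι : Type*} [LinearOrder ι] (b : ι → V)

noncomputable def halfGram : Matrix ι ι ℝ :=
  Matrix.of fun i j => if j < i then ⟪b i, b j⟫ else if j = i then ⟪b i, b i⟫ / 2 else 0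

lemma halfGram_isLowerTriangular : (halfGram b).IsLowerTriangular := by
  intro i j hij
  have hij : i < j := hij
  simp [halfGram, hij.not_gt, hij.ne']

lemma det_halfGram_ne_zero [Fintype ι] (hb : ∀ i, b i ≠ 0) : (halfGram b).det ≠ 0 := by
  rw [Matrix.det_of_isLowerTriangular _ (halfGram_isLowerTriangular b)]
  refine prod_ne_zero_iff.2 fun i _ => ?_
  simpa [halfGram] using hb i

lemma halfGram_mulVec_apply [Fintype ι] [LocallyFiniteOrderBot ι] (c : ι → ℝ) (i : ι) :
    (halfGram b *ᵥ c) i = ⟪b i, b i⟫ / 2 * c i + ∑ j ∈ Iio i, ⟪b i, b j⟫ * c j := by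
  have hterm : ∀ j, halfGram b i j * c j
      = (if j < i then ⟪b i, b j⟫ * c j else 0) + (if j = i then ⟪b i, b i⟫ / 2 * c i else 0) := by
    intro j
    rcases lt_trichotomy j i with hji | rfl | hji
    · simp [halfGram, hji, hji.ne]
    · simp [halfGram]
    · simp [halfGram, hji.not_gt, hji.ne']
  rw [Matrix.mulVec, dotProduct]
  simp_rw [hterm, sum_add_distrib, sum_ite_eq', ← sum_filter, filter_gt_eq_Iio]
  simp [add_comm]

lemma two_smul_halfGram_add_eq_gram (M : Matrix ι ι ℝ)
    (hM : ∀ i j, M i j =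
      if i < j then ⟪b i, b j⟫ else if j < i then -⟪b j, b i⟫ else 0) :
    (2 : ℝ) • halfGram b + M = Matrix.gram ℝ b := by
  ext i j
  rcases lt_trichotomy i j with hij | rfl | hij
  · simp [halfGram, hM, hij, hij.not_gt, hij.ne']
  · simp [halfGram, hM]
    ring
  · simp [halfGram, hM, hij, hij.not_gt, real_inner_comm (b i)]
    ring

lemma halfGram_mulVec_of_mulVec_eq_zero [Fintype ι] (M : Matrix ι ι ℝ)
    (hM : ∀ i j, M i j =
      if i < j then ⟪b i, b j⟫ else if j < i then -⟪b j, b i⟫ else 0)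
    {x : ι → ℝ} (hx : M *ᵥ x = 0) :
    halfGram b *ᵥ x = fun i => ⟪b i, (1 / 2 : ℝ) • ∑ j, x j • b j⟫ := by
  have h := congrArg (· *ᵥ x) (two_smul_halfGram_add_eq_gram b M hM)
  simp only [Matrix.add_mulVec, Matrix.smul_mulVec, hx, add_zero] at h
  ext i
  have hi := congrFun h i
  simp [Matrix.mulVec, dotProduct, Matrix.gram, inner_sum, real_inner_smul_right, mul_comm]
    at hi ⊢
  linarith

end HalfGram

section Expansion

variable {V : Type*} [NormedAddCommGroup V] [InnerProductSpace ℝ V]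
  {w s : ℕ → Module.End ℝ V} {α : ℕ → V} {m : ℕ}

lemma coeffc_succ (hw : ∀ i (x y : V), ⟪w i x, w i y⟫ = ⟪x, y⟫) {n : ℕ} (h : n ≤ m) (γ : V) :
    coeffc w s α m γ (n + 1)
      = 2 * ⟪α (n + 1), suff w m (n + 1) γ⟫ / ⟪α (n + 1), α (n + 1)⟫ := by
  rw [coeffc, betaD, Nat.add_sub_cancel, ← plainPref_mul_suff w h, Module.End.mul_apply,
    inner_plainPref_apply hw, inner_plainPref_apply hw]
  ring

lemma pref_mul_suff_apply (hw : ∀ i (x y : V), ⟪w i x, w i y⟫ = ⟪x, y⟫)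
    (hs : ∀ ℓ (v : V), s ℓ v = v - ((2 * ⟪α ℓ, v⟫) / ⟪α ℓ, α ℓ⟫) • α ℓ)
    {n : ℕ} (h : n ≤ m) (γ : V) :
    (pref w s n * suff w m (n + 1)) γ
      = plainPref w m γ - ∑ i ∈ range n, coeffc w s α m γ (i + 1) • betaV w s α (i + 1) := by
  induction n with
  | zero =>
    rw [range_zero, sum_empty, sub_zero, ← plainPref_mul_suff w h]
    rfl
  | succ n ih =>
    have hsuff : w (n + 1) (suff w m (n + 1 + 1) γ) = suff w m (n + 1) γ := by
      rw [suff_eq_mul_suff_succ w h]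
      rfl
    change pref w s n (s (n + 1) (w (n + 1) (suff w m (n + 1 + 1) γ))) = _
    rw [hsuff, hs, map_sub, map_smul, ← Module.End.mul_apply, ih (by omega),
      ← coeffc_succ hw (by omega), sum_range_succ, betaV, Nat.add_sub_cancel]
    abel

lemma pref_apply (hw : ∀ i (x y : V), ⟪w i x, w i y⟫ = ⟪x, y⟫)
    (hs : ∀ ℓ (v : V), s ℓ v = v - ((2 * ⟪α ℓ, v⟫) / ⟪α ℓ, α ℓ⟫) • α ℓ) (γ : V) :
    pref w s m γ
      = plainPref w m γ - ∑ h : Fin m, coeffc w s α m γ (h + 1) • betaV w s α (h + 1) := by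
  have := pref_mul_suff_apply hw hs (le_refl m) γ
  rwa [suff_self_add_one, mul_one,
    ← Fin.sum_univ_eq_sum_range (fun i => coeffc w s α m γ (i + 1) • betaV w s α (i + 1))]
    at this

lemma inner_betaV_succ_self (hw : ∀ i (x y : V), ⟪w i x, w i y⟫ = ⟪x, y⟫)
    (hs : ∀ ℓ (v : V), s ℓ v = v - ((2 * ⟪α ℓ, v⟫) / ⟪α ℓ, α ℓ⟫) • α ℓ) (n : ℕ) :
    ⟪betaV w s α (n + 1), betaV w s α (n + 1)⟫ = ⟪α (n + 1), α (n + 1)⟫ := by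
  rw [betaV, Nat.add_sub_cancel, inner_pref_apply hw hs]

lemma betaV_succ_ne_zero (hw : ∀ i (x y : V), ⟪w i x, w i y⟫ = ⟪x, y⟫)
    (hs : ∀ ℓ (v : V), s ℓ v = v - ((2 * ⟪α ℓ, v⟫) / ⟪α ℓ, α ℓ⟫) • α ℓ) {n : ℕ}
    (hα : α (n + 1) ≠ 0) : betaV w s α (n + 1) ≠ 0 := by
  rw [← inner_self_ne_zero (𝕜 := ℝ), inner_betaV_succ_self hw hs]
  exact inner_self_ne_zero.2 hα

lemma coeffc_triangular (hw : ∀ i (x y : V), ⟪w i x, w i y⟫ = ⟪x, y⟫)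
    (hs : ∀ ℓ (v : V), s ℓ v = v - ((2 * ⟪α ℓ, v⟫) / ⟪α ℓ, α ℓ⟫) • α ℓ)
    (hα : ∀ ℓ, α ℓ ≠ 0) {n : ℕ} (h : n ≤ m) (γ : V) :
    ⟪betaV w s α (n + 1), betaV w s α (n + 1)⟫ / 2 * coeffc w s α m γ (n + 1)
      + ∑ i ∈ range n, ⟪betaV w s α (n + 1), betaV w s α (i + 1)⟫ * coeffc w s α m γ (i + 1)
      = ⟪betaV w s α (n + 1), plainPref w m γ⟫ := by
  have hpair : ⟪betaV w s α (n + 1), (pref w s n * suff w m (n + 1)) γ⟫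
      = ⟪α (n + 1), suff w m (n + 1) γ⟫ := by
    rw [betaV, Nat.add_sub_cancel, Module.End.mul_apply, inner_pref_apply hw hs]
  rw [pref_mul_suff_apply hw hs h, inner_sub_right, inner_sum] at hpair
  simp_rw [real_inner_smul_right, mul_comm (coeffc w s α m γ _)] at hpair
  have : ⟪α (n + 1), α (n + 1)⟫ ≠ 0 := inner_self_ne_zero.2 (hα (n + 1))
  rw [inner_betaV_succ_self hw hs, coeffc_succ hw h]
  field_simp
  linarith

lemma halfGram_betaV_mulVec_coeffc (hw : ∀ i (x y : V), ⟪w i x, w i y⟫ = ⟪x, y⟫)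
    (hs : ∀ ℓ (v : V), s ℓ v = v - ((2 * ⟪α ℓ, v⟫) / ⟪α ℓ, α ℓ⟫) • α ℓ)
    (hα : ∀ ℓ, α ℓ ≠ 0) (γ : V) :
    halfGram (fun h : Fin m => betaV w s α (h + 1)) *ᵥ (fun h => coeffc w s α m γ (h + 1))
      = fun h : Fin m => ⟪betaV w s α (h + 1), plainPref w m γ⟫ := by
  ext ℓ
  rw [halfGram_mulVec_apply, ← coeffc_triangular hw hs hα ℓ.isLt.le, ← Nat.Iio_eq_range,
    ← Fin.map_valEmbedding_Iio, sum_map]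
  rfl

end Expansion

theorem Phi_Psi_inverse_bijections_general
    {V : Type*} [NormedAddCommGroup V] [InnerProductSpace ℝ V]
    (m : ℕ) (w s : ℕ → Module.End ℝ V) (α : ℕ → V)
    (hα : ∀ ℓ, α ℓ ≠ 0)
    (hw : ∀ i (x y : V), ⟪w i x, w i y⟫ = ⟪x, y⟫)
    (hs : ∀ ℓ (v : V), s ℓ v = v - ((2 * ⟪α ℓ, v⟫) / ⟪α ℓ, α ℓ⟫) • α ℓ)
    (wΔinv : Module.End ℝ V)
    (hinv : wΔinv * plainPref w m = 1 ∧ plainPref w m * wΔinv = 1)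
    (M : Matrix (Fin m) (Fin m) ℝ)
    (hM : ∀ i l : Fin m, M i l =
      if i < l then ⟪betaV w s α (↑i + 1), betaV w s α (↑l + 1)⟫
      else if l < i then -⟪betaV w s α (↑l + 1), betaV w s α (↑i + 1)⟫ else 0)
    (Φ : (Fin m → ℝ) →ₗ[ℝ] V)
    (hΦ : ∀ h : Fin m,
      Φ (Pi.single h 1) = (1 / 2 : ℝ) • wΔinv (betaV w s α (↑h + 1))) :
    (∀ x ∈ LinearMap.ker M.mulVecLin, (pref w s m + plainPref w m) (Φ x) = 0) ∧
      (∀ x ∈ LinearMap.ker M.mulVecLin,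
        (fun h : Fin m => coeffc w s α m (Φ x) (↑h + 1)) = x) ∧
      (∀ γ : V, (pref w s m + plainPref w m) γ = 0 →
        Φ (fun h : Fin m => coeffc w s α m γ (↑h + 1)) = γ) := by
  have hwΔΦ (x : Fin m → ℝ) :
      plainPref w m (Φ x) = (1 / 2 : ℝ) • ∑ h, x h • betaV w s α (h + 1) := by
    rw [← (LinearEquiv.piRing ℝ V (Fin m) ℝ).symm_apply_apply Φ, LinearEquiv.piRing_symm_apply]
    simp only [LinearEquiv.piRing_apply, hΦ, map_sum, map_smul, smul_comm (x _)]
    simp [← Module.End.mul_apply, hinv.2, Finset.smul_sum]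
  have hΨΦ : ∀ x ∈ LinearMap.ker M.mulVecLin,
      (fun h : Fin m => coeffc w s α m (Φ x) (↑h + 1)) = x := by
    intro x hx
    have hT := det_halfGram_ne_zero (fun h : Fin m => betaV w s α (h + 1))
      fun _ => betaV_succ_ne_zero hw hs (hα _)
    refine mulVec_injective_iff_isUnit.2 ((isUnit_iff_isUnit_det _).2 hT.isUnit) ?_
    rw [halfGram_betaV_mulVec_coeffc hw hs hα, halfGram_mulVec_of_mulVec_eq_zero _ M hM hx, hwΔΦ]
  refine ⟨fun x hx => ?_, hΨΦ, fun γ hγ => ?_⟩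
  · have hcoeff : ∀ h : Fin m, coeffc w s α m (Φ x) (h + 1) = x h := congrFun (hΨΦ x hx)
    rw [LinearMap.add_apply, pref_apply hw hs, hwΔΦ]
    simp only [hcoeff]
    module
  · rw [LinearMap.add_apply, pref_apply hw hs] at hγ
    have hwΔinv (v : V) : wΔinv (plainPref w m v) = v := LinearMap.congr_fun hinv.1 v
    have hwΔ :
        plainPref w m (Φ fun h : Fin m => coeffc w s α m γ (h + 1)) = plainPref w m γ := by
      rw [hwΔΦ]
      linear_combination (norm := module) (-(1 / 2 : ℝ)) • hγ
    rw [← hwΔinv (Φ _), hwΔ, hwΔinv]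

theorem Phi_Psi_inverse_bijections
    {V : Type*} [NormedAddCommGroup V] [InnerProductSpace ℝ V] [FiniteDimensional ℝ V]
    (m : ℕ) (w s : ℕ → Module.End ℝ V) (α : ℕ → V)
    (hα : ∀ ℓ, α ℓ ≠ 0)
    (hw : ∀ i (x y : V), ⟪w i x, w i y⟫ = ⟪x, y⟫)
    (hs : ∀ ℓ (v : V), s ℓ v = v - ((2 * ⟪α ℓ, v⟫) / ⟪α ℓ, α ℓ⟫) • α ℓ)
    (wΔinv : Module.End ℝ V)
    (hinv : wΔinv * plainPref w m = 1 ∧ plainPref w m * wΔinv = 1)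
    (M : Matrix (Fin m) (Fin m) ℝ)
    (hM : ∀ i l : Fin m, M i l =
      if i < l then ⟪betaV w s α (↑i + 1), betaV w s α (↑l + 1)⟫
      else if l < i then -⟪betaV w s α (↑l + 1), betaV w s α (↑i + 1)⟫ else 0)
    (Φ : (Fin m → ℝ) →ₗ[ℝ] V)
    (hΦ : ∀ h : Fin m,
      Φ (Pi.single h 1) = (1 / 2 : ℝ) • wΔinv (betaV w s α (↑h + 1))) :
    (∀ x ∈ LinearMap.ker M.mulVecLin, (pref w s m + plainPref w m) (Φ x) = 0) ∧
      (∀ x ∈ LinearMap.ker M.mulVecLin,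
        (fun h : Fin m => coeffc w s α m (Φ x) (↑h + 1)) = x) ∧
      (∀ γ : V, (pref w s m + plainPref w m) γ = 0 →
        Φ (fun h : Fin m => coeffc w s α m γ (↑h + 1)) = γ) :=
  Phi_Psi_inverse_bijections_general m w s α hα hw hs wΔinv hinv M hM Φ hΦ
end
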